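/- Semiselective Galvin lemma for FIN_k^∞: Given a family F of finite block sequences of FIN_k, a semiselective coideal H ⊆ FIN_k^∞, and A ∈ H, there exists B ∈ H with B ≤ A such that either (1) no finite block sequence that is a condensation of B belongs to F, or (2) every C ∈ [∅, B] has some initial segment r_n(C) ∈ F. -/

import Mathlib

open scoped symmDiff

namespace FINkSpace

/-- The support of `p : ℕ → ℕ`. -/
def supp (p : ℕ → ℕ) : Set ℕ := {n | p n ≠ 0}

/-- `p` is an element of `FIN_k`: values at most `k`, finite support, `k` attained. -/
def IsFINk (k : ℕ) (p : ℕ → ℕ) : Prop :=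
  (∀ n, p n ≤ k) ∧ (supp p).Finite ∧ ∃ n, p n = k

/-- The tetris operation `T(p)(n) = max (p n - 1) 0` (truncated subtraction). -/
def tetris (p : ℕ → ℕ) : ℕ → ℕ := fun n => p n - 1

/-- `A` is an infinite block sequence of elements of `FIN_k`. -/
def IsBlockSeq (k : ℕ) (A : ℕ → ℕ → ℕ) : Prop :=
  (∀ n, IsFINk k (A n)) ∧ ∀ n i j, A n i ≠ 0 → A (n + 1) j ≠ 0 → i < j

/-- `p` belongs to the combinatorial span `[B]`:
`p = T^{(i₀)}(B n₀) + ⋯ + T^{(i_l)}(B n_l)` with `n₀ < ⋯ < n_l` and some `i_j = 0`.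
Note `T^{(i)}(q) m = q m - i` (truncated subtraction). -/
def InSpan (k : ℕ) (B : ℕ → ℕ → ℕ) (p : ℕ → ℕ) : Prop :=
  ∃ (l : ℕ) (n : Fin (l + 1) → ℕ) (i : Fin (l + 1) → ℕ),
    StrictMono n ∧ (∀ j, i j ≤ k) ∧ (∃ j, i j = 0) ∧
    p = fun m => ∑ j, (B (n j) m - i j)

/-- `A ≤ B` : `A` is a condensation of `B` (every term of `A` lies in `[B]`). -/
def Cond (k : ℕ) (A B : ℕ → ℕ → ℕ) : Prop := ∀ n, InSpan k B (A n)

/-- `A ≤* B` : all but finitely many terms of `A` lie in `[B]`. -/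
def AlmostCond (k : ℕ) (A B : ℕ → ℕ → ℕ) : Prop := ∃ N, ∀ n, N ≤ n → InSpan k B (A n)

/-- `a` is a finite block sequence of elements of `FIN_k`. -/
def IsFinBlockSeq (k : ℕ) (a : List (ℕ → ℕ)) : Prop :=
  (∀ p ∈ a, IsFINk k p) ∧
  ∀ m, m + 1 < a.length → ∀ i j,
    (a.getD m fun _ => 0) i ≠ 0 → (a.getD (m + 1) fun _ => 0) j ≠ 0 → i < j

/-- `p` belongs to the span of the finite block sequence `a`. -/
def InSpanList (k : ℕ) (a : List (ℕ → ℕ)) (p : ℕ → ℕ) : Prop :=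
  ∃ (l : ℕ) (n : Fin (l + 1) → ℕ) (i : Fin (l + 1) → ℕ),
    StrictMono n ∧ (∀ j, n j < a.length) ∧ (∀ j, i j ≤ k) ∧ (∃ j, i j = 0) ∧
    p = fun m => ∑ j, ((a.getD (n j) fun _ => 0) m - i j)

/-- `rList n A` is the finite block sequence of the first `n` blocks of `A`. -/
def rList (n : ℕ) (A : ℕ → ℕ → ℕ) : List (ℕ → ℕ) := (List.range n).map A

/-- `b ≤_fin a` : every term of the finite block sequence `b` lies in the span of `a`. -/
def LeFin (k : ℕ) (b a : List (ℕ → ℕ)) : Prop :=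
  IsFinBlockSeq k b ∧ ∀ p ∈ b, InSpanList k a p

/-- The Ellentuck-type basic set `[a,A]`. -/
def Basic (k : ℕ) (a : List (ℕ → ℕ)) (A : ℕ → ℕ → ℕ) : Set (ℕ → ℕ → ℕ) :=
  {B | IsBlockSeq k B ∧ rList a.length B = a ∧ Cond k B A}

/-- `depth_A(a)` : the least `n` with `a ≤_fin r_n(A)`. -/
noncomputable def depth (k : ℕ) (A : ℕ → ℕ → ℕ) (a : List (ℕ → ℕ)) : ℕ :=
  sInf {n | ∀ p ∈ a, InSpanList k (rList n A) p}

/-- `a ∈ FIN_k^{<∞} ↾ A` : `a` is a finite block sequence all whose terms lie in `[A]`. -/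
def FinCond (k : ℕ) (a : List (ℕ → ℕ)) (A : ℕ → ℕ → ℕ) : Prop :=
  IsFinBlockSeq k a ∧ ∀ p ∈ a, InSpan k A p

end FINkSpace

namespace FINkSpace

/-- A coideal on `FIN_k^∞` (Definition of coideal in the paper). -/
structure Coideal (k : ℕ) where
  mem : (ℕ → ℕ → ℕ) → Prop
  blockseq : ∀ A, mem A → IsBlockSeq k A
  finiteChanges : ∀ A B, mem A → IsBlockSeq k B → (Set.range A ∆ Set.range B).Finite → mem B
  upward : ∀ A B, mem A → IsBlockSeq k B → Cond k A B → mem B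
  a3_1 : ∀ A, mem A → ∀ a, FinCond k a A →
    ∀ B, mem B → B ∈ Basic k (rList (depth k A a) A) A → (Basic k a B).Nonempty
  a3_2 : ∀ A, mem A → ∀ a, FinCond k a A →
    ∀ B, mem B → Cond k B A → (Basic k a B).Nonempty →
      ∃ A', mem A' ∧ A' ∈ Basic k (rList (depth k A a) A) A ∧
        (Basic k a A').Nonempty ∧ Basic k a A' ⊆ Basic k a B
  a4 : ∀ A, mem A → ∀ a, FinCond k a A → ∀ O : Set (List (ℕ → ℕ)),
    ∃ B, mem B ∧ B ∈ Basic k (rList (depth k A a) A) A ∧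
      ({b | ∃ C ∈ Basic k a B, b = rList (a.length + 1) C} ⊆ O ∨
       {b | ∃ C ∈ Basic k a B, b = rList (a.length + 1) C} ∩ O = ∅)

/-- `D` is dense open in `S` (with respect to the condensation order). -/
def DenseOpenIn (k : ℕ) (D S : Set (ℕ → ℕ → ℕ)) : Prop :=
  D ⊆ S ∧ (∀ A ∈ S, ∃ B ∈ D, Cond k B A) ∧
  ∀ A B, A ∈ S → B ∈ D → Cond k A B → A ∈ D

/-- `H` is a selective coideal. -/
def Selective (k : ℕ) (H : Coideal k) : Prop :=
  ∀ a A, H.mem A → (Basic k a A).Nonempty →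
    ∀ As : ℕ → ℕ → ℕ → ℕ,
      (∀ n, H.mem (As n) ∧ Cond k (As n) A ∧ Cond k (As (n + 1)) (As n) ∧
        (Basic k a (As n)).Nonempty) →
      ∃ B, H.mem B ∧ B ∈ Basic k a A ∧
        ∀ b, FinCond k b B → Basic k b B ⊆ Basic k b (As (depth k A b))

/-- `H` is a semiselective coideal. -/
def Semiselective (k : ℕ) (H : Coideal k) : Prop :=
  ∀ A, H.mem A →
    ∀ D : List (ℕ → ℕ) → Set (ℕ → ℕ → ℕ),
      (∀ a, FinCond k a A →
        DenseOpenIn k (D a) ({B | H.mem B} ∩ Basic k (rList (depth k A a) A) A)) →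
      ∀ C, H.mem C → Cond k C A →
        ∃ B, H.mem B ∧ Cond k B C ∧
          ∃ As : List (ℕ → ℕ) → ℕ → ℕ → ℕ,
            (∀ a, FinCond k a A → As a ∈ D a) ∧
            ∀ a, FinCond k a B → Basic k a B ⊆ Basic k a (As a)

end FINkSpace

/-!
Galvin–Prikry argument. Say `Y` accepts `a` if every `C ∈ [a, Y]` has an initial segment in `F`,
and rejects `a` if no `Z ∈ H ∩ [a, Y]` accepts it. By A3 the conditions "accepts or rejects `a`"
are dense open below `A`, so semiselectivity gives `B ∈ H` deciding every `a` condensed from `B`.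
If `B` accepts `[]`, the second alternative holds. Otherwise A4 and semiselectivity again give
`B' ≤ B` in `H` such that, for each `a`, the one-block extensions of `a` in `[a, B']` are either
all rejected by `B` or all not rejected, hence all accepted. The latter would make `a` accepted,
so by induction `B` rejects every `a` condensed from `B'`, and no rejected `a` lies in `F`.
-/

theorem Finset.sum_tsub_of_subsingleton_support {ι : Type*} {S : Finset ι} {f : ι → ℕ}
    (h : ∀ i ∈ S, ∀ j ∈ S, f i ≠ 0 → f j ≠ 0 → i = j) (d : ℕ) :
    (∑ i ∈ S, f i) - d = ∑ i ∈ S, (f i - d) := by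
  by_cases hne : ∃ i ∈ S, f i ≠ 0
  · obtain ⟨i, hi, hfi⟩ := hne
    have hzero : ∀ j ∈ S, j ≠ i → f j = 0 := fun j hj hji => by
      by_contra hfj
      exact hji (h j hj i hi hfj hfi)
    rw [Finset.sum_eq_single_of_mem i hi hzero,
      Finset.sum_eq_single_of_mem i hi fun j hj hji => by rw [hzero j hj hji, zero_tsub]]
  · push Not at hne
    rw [Finset.sum_eq_zero hne, zero_tsub,
      Finset.sum_eq_zero fun i hi => by rw [hne i hi, zero_tsub]]

theorem Finset.exists_eq_on_pairwiseDisjoint {ι α β : Type*} [DecidableEq α] {s : Finset ι}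
    {t : ι → Finset α} (ht : (s : Set ι).PairwiseDisjoint t) (e : ι → α → β) (d : β) :
    ∃ c : α → β, (∀ n ∈ s, ∀ m ∈ t n, c m = e n m) ∧ ∀ m ∉ s.biUnion t, c m = d := by
  classical
  refine ⟨fun m => if h : ∃ n ∈ s, m ∈ t n then e h.choose m else d, ?_, ?_⟩
  · intro n hn m hm
    have h : ∃ n ∈ s, m ∈ t n := ⟨n, hn, hm⟩
    dsimp only
    rw [dif_pos h, ht.elim_finset h.choose_spec.1 hn m h.choose_spec.2 hm]
  · intro m hm
    dsimp only
    rw [dif_neg fun ⟨n, hn, hmt⟩ => hm (Finset.mem_biUnion.mpr ⟨n, hn, hmt⟩)]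

theorem List.getD_mem {α : Type*} {l : List α} {n : ℕ} (hn : n < l.length) (d : α) :
    l.getD n d ∈ l := by
  rw [List.getD_eq_getElem _ _ hn]
  exact List.getElem_mem _

namespace FINkSpace

variable {k : ℕ} {A B C X Y : ℕ → ℕ → ℕ} {a b : List (ℕ → ℕ)} {p : ℕ → ℕ}

@[simp] theorem length_rList (n : ℕ) (A : ℕ → ℕ → ℕ) : (rList n A).length = n := by
  simp [rList]

theorem getD_rList {j n : ℕ} (h : j < n) (A : ℕ → ℕ → ℕ) (d : ℕ → ℕ) :
    (rList n A).getD j d = A j := by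
  simp [rList, h]

theorem mem_rList {n : ℕ} : p ∈ rList n A ↔ ∃ j < n, A j = p := by
  simp [rList]

theorem take_rList {m n : ℕ} (h : m ≤ n) (A : ℕ → ℕ → ℕ) :
    (rList n A).take m = rList m A := by
  simp [rList, ← List.map_take, List.take_range, Nat.min_eq_left h]

theorem IsBlockSeq.lt_of_ne_zero (hA : IsBlockSeq k A) {m m' x y : ℕ} (h : m < m')
    (hx : A m x ≠ 0) (hy : A m' y ≠ 0) : x < y := by
  induction m' generalizing y with
  | zero => omega
  | succ t ih =>
    rcases Nat.lt_succ_iff_lt_or_eq.mp h with h | rfl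
    · have hk : k ≠ 0 := fun hk => hx (Nat.le_zero.mp (hk ▸ (hA.1 m).1 x))
      obtain ⟨z, hz⟩ := (hA.1 t).2.2
      exact (ih h (by omega)).trans (hA.2 t z y (by omega) hy)
    · exact hA.2 m x y hx hy

theorem IsBlockSeq.eq_of_ne_zero (hA : IsBlockSeq k A) {m m' x : ℕ}
    (hx : A m x ≠ 0) (hx' : A m' x ≠ 0) : m = m' := by
  by_contra hne
  rcases Nat.lt_or_gt_of_ne hne with h | h
  · exact (hA.lt_of_ne_zero h hx hx').false
  · exact (hA.lt_of_ne_zero h hx' hx).false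

theorem inSpan_self (X : ℕ → ℕ → ℕ) (n : ℕ) : InSpan k X (X n) :=
  ⟨0, fun _ => n, fun _ => 0, Subsingleton.strictMono (α := Fin 1) _, fun _ => Nat.zero_le _,
    ⟨0, rfl⟩, by funext m; simp⟩

theorem cond_refl (X : ℕ → ℕ → ℕ) : Cond k X X := inSpan_self X

/-- `InSpan` with the index tuple replaced by a finset, so that substituting spans into a span
becomes a `Finset.biUnion`. -/
def InSpanFinset (k : ℕ) (B : ℕ → ℕ → ℕ) (p : ℕ → ℕ) : Prop :=
  ∃ (s : Finset ℕ) (c : ℕ → ℕ), (∀ m, c m ≤ k) ∧ (∃ m ∈ s, c m = 0) ∧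
    p = fun x => ∑ m ∈ s, (B m x - c m)

theorem InSpan.inSpanFinset (h : InSpan k B p) : InSpanFinset k B p := by
  obtain ⟨l, n, i, hn, hik, ⟨j₀, hj₀⟩, rfl⟩ := h
  have hc : ∀ j, Function.extend n i (fun _ => k) (n j) = i j := hn.injective.extend_apply _ _
  refine ⟨Finset.univ.image n, Function.extend n i fun _ => k, fun m => ?_,
    ⟨n j₀, Finset.mem_image_of_mem n (Finset.mem_univ _), by rw [hc, hj₀]⟩, ?_⟩
  · by_cases hm : ∃ j, n j = m
    · obtain ⟨j, rfl⟩ := hm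
      rw [hc]; exact hik j
    · rw [Function.extend_apply' _ _ _ hm]
  · funext x
    rw [Finset.sum_image fun _ _ _ _ h => hn.injective h]
    simp only [hc]

theorem InSpanFinset.inSpan (h : InSpanFinset k B p) : InSpan k B p := by
  obtain ⟨s, c, hck, ⟨m₀, hm₀, hc₀⟩, rfl⟩ := h
  have hcard : s.card = (s.card - 1) + 1 :=
    (Nat.succ_pred_eq_of_pos (Finset.card_pos.mpr ⟨m₀, hm₀⟩)).symm
  set e := s.orderIsoOfFin hcard
  refine ⟨s.card - 1, fun j => e j, fun j => c (e j), fun a b hab => e.strictMono hab,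
    fun j => hck _, ⟨e.symm ⟨m₀, hm₀⟩, by simpa using hc₀⟩, ?_⟩
  funext x
  rw [← Finset.sum_coe_sort s]
  exact (Fintype.sum_equiv e.toEquiv _ _ fun j => rfl).symm

/-- Blocks have disjoint supports, so at each point at most one term survives, and terms whose
total coefficient reaches `k` vanish. -/
theorem IsBlockSeq.sum_tsub_tsub (hA : IsBlockSeq k A) (s : Finset ℕ) (e : ℕ → ℕ)
    (d x : ℕ) :
    (∑ m ∈ s, (A m x - e m)) - d = ∑ m ∈ s with e m + d < k, (A m x - (e m + d)) := by
  have hsub : ∀ m₁ ∈ s, ∀ m₂ ∈ s, A m₁ x - e m₁ ≠ 0 → A m₂ x - e m₂ ≠ 0 → m₁ = m₂ :=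
    fun m₁ _ m₂ _ h₁ h₂ => hA.eq_of_ne_zero (x := x) (by omega) (by omega)
  rw [Finset.sum_tsub_of_subsingleton_support hsub, Finset.sum_filter_of_ne]
  · exact Finset.sum_congr rfl fun m _ => tsub_tsub _ _ _
  · intro m _ hm
    have := (hA.1 m).1 x
    omega

theorem ne_zero_of_eq_sum_tsub {s : Finset ℕ} {e : ℕ → ℕ} {m x : ℕ}
    (hp : p = fun x => ∑ m ∈ s, (A m x - e m)) (hm : m ∈ s) (he : e m < k) (hx : A m x = k) :
    p x ≠ 0 := by
  have := Finset.single_le_sum (f := fun m => A m x - e m) (fun _ _ => Nat.zero_le _) hm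
  simp only [hp]
  omega

theorem InSpanFinset.trans (hp : InSpanFinset k B p) (hBA : ∀ n, InSpanFinset k A (B n))
    (hB : IsBlockSeq k B) (hA : IsBlockSeq k A) : InSpanFinset k A p := by
  obtain ⟨s, c, hck, ⟨n₀, hn₀, hc₀⟩, rfl⟩ := hp
  rcases Nat.eq_zero_or_pos k with rfl | hk
  · refine ⟨s, c, hck, ⟨n₀, hn₀, hc₀⟩, funext fun x => Finset.sum_congr rfl fun m _ => ?_⟩
    have := (hA.1 m).1 x
    have := (hB.1 m).1 x
    omega
  choose sB cB hcBk hcB₀ hBeq using hBA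
  set t : ℕ → Finset ℕ := fun n => {m ∈ sB n | cB n m + c n < k}
  -- `B n` is nonzero wherever a block `A m` with `m ∈ t n` attains `k`.
  have ht : (s : Set ℕ).PairwiseDisjoint t := by
    intro n₁ _ n₂ _ hne
    refine Finset.disjoint_left.mpr fun m h₁ h₂ => hne ?_
    simp only [t, Finset.mem_filter] at h₁ h₂
    obtain ⟨x, hx⟩ := (hA.1 m).2.2
    exact hB.eq_of_ne_zero (ne_zero_of_eq_sum_tsub (hBeq n₁) h₁.1 (by omega) hx)
      (ne_zero_of_eq_sum_tsub (hBeq n₂) h₂.1 (by omega) hx)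
  obtain ⟨c', hc'eq, hc'out⟩ :=
    Finset.exists_eq_on_pairwiseDisjoint ht (fun n m => cB n m + c n) k
  obtain ⟨m₀, hm₀, hcB₀m₀⟩ := hcB₀ n₀
  have hm₀t : m₀ ∈ t n₀ := Finset.mem_filter.mpr ⟨hm₀, by omega⟩
  refine ⟨s.biUnion t, c', fun m => ?_,
    ⟨m₀, Finset.mem_biUnion.mpr ⟨n₀, hn₀, hm₀t⟩, ?_⟩, ?_⟩
  · by_cases hm : m ∈ s.biUnion t
    · obtain ⟨n, hn, hmt⟩ := Finset.mem_biUnion.mp hm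
      rw [hc'eq n hn m hmt]
      exact (Finset.mem_filter.mp hmt).2.le
    · exact (hc'out m hm).le
  · rw [hc'eq n₀ hn₀ m₀ hm₀t]; omega
  · funext x
    rw [Finset.sum_biUnion ht]
    refine Finset.sum_congr rfl fun n hn => ?_
    rw [hBeq n, hA.sum_tsub_tsub]
    exact Finset.sum_congr rfl fun m hm => by rw [hc'eq n hn m hm]

theorem InSpan.trans (hp : InSpan k B p) (hBA : Cond k B A) (hB : IsBlockSeq k B)
    (hA : IsBlockSeq k A) : InSpan k A p :=
  (hp.inSpanFinset.trans (fun n => (hBA n).inSpanFinset) hB hA).inSpan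

theorem Cond.trans (hCB : Cond k C B) (hBA : Cond k B A) (hB : IsBlockSeq k B)
    (hA : IsBlockSeq k A) : Cond k C A :=
  fun n => (hCB n).trans hBA hB hA

theorem InSpanList.rList_mono {N M : ℕ} (hNM : N ≤ M) (h : InSpanList k (rList N X) p) :
    InSpanList k (rList M X) p := by
  obtain ⟨l, n, i, hn, hlt, hik, hi₀, rfl⟩ := h
  simp only [length_rList] at hlt
  refine ⟨l, n, i, hn, fun j => by simpa using (hlt j).trans_le hNM, hik, hi₀, ?_⟩
  simp only [getD_rList (hlt _), getD_rList ((hlt _).trans_le hNM)]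

theorem InSpanList.inSpan {N : ℕ} (h : InSpanList k (rList N X) p) : InSpan k X p := by
  obtain ⟨l, n, i, hn, hlt, hik, hi₀, rfl⟩ := h
  simp only [length_rList] at hlt
  exact ⟨l, n, i, hn, hik, hi₀, by simp only [getD_rList (hlt _)]⟩

theorem InSpan.exists_inSpanList (hp : InSpan k X p) :
    ∃ N, InSpanList k (rList N X) p ∧ ∀ x, p x ≠ 0 → ∃ m < N, X m x ≠ 0 := by
  obtain ⟨l, n, i, hn, hik, hi₀, rfl⟩ := hp
  have hlt : ∀ j, n j < n (Fin.last l) + 1 :=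
    fun j => Nat.lt_succ_of_le (hn.monotone (Fin.le_last j))
  refine ⟨n (Fin.last l) + 1, ⟨l, n, i, hn, by simpa using hlt, hik, hi₀, ?_⟩,
    fun x hx => ?_⟩
  · simp only [getD_rList (hlt _)]
  · obtain ⟨j, _, hj⟩ := Finset.exists_ne_zero_of_sum_ne_zero hx
    exact ⟨n j, hlt j, fun h => hj (by rw [h, zero_tsub])⟩

theorem exists_rList_bound (hb : ∀ p ∈ b, InSpan k X p) :
    ∃ N, (∀ p ∈ b, InSpanList k (rList N X) p) ∧
      ∀ p ∈ b, ∀ x, p x ≠ 0 → ∃ m < N, X m x ≠ 0 := by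
  induction b with
  | nil => exact ⟨0, by simp, by simp⟩
  | cons q b ih =>
    obtain ⟨N₁, hN₁, hN₁'⟩ := ih fun p hp => hb p (List.mem_cons_of_mem q hp)
    obtain ⟨N₂, hN₂, hN₂'⟩ := (hb q List.mem_cons_self).exists_inSpanList
    refine ⟨max N₁ N₂, ?_, ?_⟩
    · rintro p (_ | ⟨_, hp⟩)
      · exact hN₂.rList_mono (le_max_right _ _)
      · exact (hN₁ p hp).rList_mono (le_max_left _ _)
    · rintro p (_ | ⟨_, hp⟩) x hx
      · obtain ⟨m, hm, h⟩ := hN₂' x hx; exact ⟨m, by omega, h⟩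
      · obtain ⟨m, hm, h⟩ := hN₁' p hp x hx; exact ⟨m, by omega, h⟩

theorem inSpanList_rList_depth (hb : ∀ p ∈ b, InSpan k X p) :
    ∀ p ∈ b, InSpanList k (rList (depth k X b) X) p := by
  obtain ⟨N, hN, _⟩ := exists_rList_bound hb
  exact Nat.sInf_mem (⟨N, hN⟩ : Set.Nonempty {n | ∀ p ∈ b, InSpanList k (rList n X) p})

theorem forall_inSpan_of_rList_depth_eq (hb : ∀ p ∈ b, InSpan k X p)
    (hpre : rList (depth k X b) Y = rList (depth k X b) X) : ∀ p ∈ b, InSpan k Y p :=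
  fun p hp => (hpre ▸ inSpanList_rList_depth hb p hp).inSpan

theorem depth_congr (hb : ∀ p ∈ b, InSpan k X p)
    (hpre : rList (depth k X b) Y = rList (depth k X b) X) : depth k Y b = depth k X b := by
  have agree : ∀ n ≤ depth k X b, rList n Y = rList n X := fun n hn => by
    rw [← take_rList hn, hpre, take_rList hn]
  have hY : depth k X b ∈ {n | ∀ p ∈ b, InSpanList k (rList n Y) p} := fun p hp => by
    rw [hpre]; exact inSpanList_rList_depth hb p hp
  refine le_antisymm (Nat.sInf_le hY) (le_csInf ⟨_, hY⟩ fun n hn => ?_)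
  by_contra hlt
  push Not at hlt
  have hX : n ∈ {n | ∀ p ∈ b, InSpanList k (rList n X) p} := fun p hp =>
    agree n hlt.le ▸ hn p hp
  exact (Nat.sInf_le hX).not_gt hlt

theorem FinCond.mono (h : FinCond k a X) (hXY : Cond k X Y) (hX : IsBlockSeq k X)
    (hY : IsBlockSeq k Y) : FinCond k a Y :=
  ⟨h.1, fun p hp => (h.2 p hp).trans hXY hX hY⟩

theorem finCond_nil : FinCond k [] X :=
  ⟨⟨by simp, by simp⟩, by simp⟩

theorem FinCond.of_append (h : FinCond k (a ++ b) X) : FinCond k a X := by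
  refine ⟨⟨fun q hq => h.1.1 q (List.mem_append_left _ hq), fun m hm i j hi hj => ?_⟩,
    fun q hq => h.2 q (List.mem_append_left _ hq)⟩
  rw [← List.getD_append _ b _ _ (by omega)] at hi
  rw [← List.getD_append _ b _ _ hm] at hj
  exact h.1.2 m (by simp; omega) i j hi hj

theorem IsBlockSeq.isFinBlockSeq_rList (hC : IsBlockSeq k C) (n : ℕ) :
    IsFinBlockSeq k (rList n C) := by
  refine ⟨fun p hp => ?_, fun m hm i j hi hj => ?_⟩
  · obtain ⟨j, _, rfl⟩ := mem_rList.1 hp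
    exact hC.1 j
  · rw [length_rList] at hm
    rw [getD_rList (by omega)] at hi
    rw [getD_rList hm] at hj
    exact hC.2 m i j hi hj

theorem IsBlockSeq.finCond_rList (hC : IsBlockSeq k C) (hCX : Cond k C X) (n : ℕ) :
    FinCond k (rList n C) X :=
  ⟨hC.isFinBlockSeq_rList n, fun p hp => by
    obtain ⟨j, _, rfl⟩ := mem_rList.1 hp
    exact hCX j⟩

theorem basic_mono (hXY : Cond k X Y) (hX : IsBlockSeq k X) (hY : IsBlockSeq k Y) :
    Basic k a X ⊆ Basic k a Y :=
  fun _ hC => ⟨hC.1, hC.2.1, hC.2.2.trans hXY hX hY⟩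

theorem basic_append_subset : Basic k (a ++ b) X ⊆ Basic k a X := by
  rintro C ⟨hC, hpre, hCX⟩
  refine ⟨hC, ?_, hCX⟩
  rw [← take_rList (n := (a ++ b).length) (by simp), hpre, List.take_left]

theorem mem_basic_rList_self {n : ℕ} :
    C ∈ Basic k (rList n C) X ↔ IsBlockSeq k C ∧ Cond k C X := by
  simp only [Basic, Set.mem_ofPred_eq, length_rList, true_and]

theorem rList_eq_of_mem_basic_rList {n : ℕ} {Z : ℕ → ℕ → ℕ}
    (h : Y ∈ Basic k (rList n X) Z) :
    rList n Y = rList n X := by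
  simpa using h.2.1

def appendTail (b : List (ℕ → ℕ)) (X : ℕ → ℕ → ℕ) (N : ℕ) : ℕ → ℕ → ℕ :=
  fun n => if n < b.length then b.getD n (fun _ => 0) else X (n - b.length + N)

theorem isBlockSeq_appendTail {N : ℕ} (hX : IsBlockSeq k X) (hb : IsFinBlockSeq k b)
    (hN : ∀ p ∈ b, ∀ x, p x ≠ 0 → ∃ m < N, X m x ≠ 0) :
    IsBlockSeq k (appendTail b X N) := by
  refine ⟨fun n => ?_, fun n i j hi hj => ?_⟩
  · unfold appendTail
    split_ifs with hn
    · exact hb.1 _ (List.getD_mem hn _)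
    · exact hX.1 _
  · unfold appendTail at hi hj
    split_ifs at hi hj with hn hn'
    · exact hb.2 n hn' i j hi hj
    · rw [show n + 1 - b.length + N = N by omega] at hj
      obtain ⟨m, hm, hmx⟩ := hN _ (List.getD_mem hn _) i hi
      exact hX.lt_of_ne_zero hm hmx hj
    · omega
    · rw [show n + 1 - b.length + N = n - b.length + N + 1 by omega] at hj
      exact hX.2 _ i j hi hj

theorem rList_appendTail (X : ℕ → ℕ → ℕ) (N : ℕ) :
    rList b.length (appendTail b X N) = b :=
  List.ext_getElem (by simp) fun j _ h => by
    simp [rList, appendTail, h]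

theorem cond_appendTail (hb : ∀ p ∈ b, InSpan k X p) (N : ℕ) :
    Cond k (appendTail b X N) X := by
  intro n
  unfold appendTail
  split_ifs with hn
  · exact hb _ (List.getD_mem hn _)
  · exact inSpan_self X _

theorem finite_symmDiff_range_appendTail (X : ℕ → ℕ → ℕ) (N : ℕ) :
    (Set.range X ∆ Set.range (appendTail b X N)).Finite := by
  refine ((List.finite_toSet b).union ((Set.finite_Iio N).image X)).subset ?_
  rintro q (⟨⟨m, rfl⟩, hq⟩ | ⟨⟨n, rfl⟩, hq⟩)
  · refine Or.inr ⟨m, Set.mem_Iio.mpr (not_le.mp fun hm => hq ⟨m - N + b.length, ?_⟩), rfl⟩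
    simp only [appendTail, if_neg (show ¬ m - N + b.length < b.length by omega)]
    congr 1
    omega
  · unfold appendTail at hq ⊢
    split_ifs with hn
    · exact Or.inl (List.getD_mem hn _)
    · rw [if_neg hn] at hq
      exact absurd ⟨_, rfl⟩ hq

theorem Coideal.exists_mem_basic (H : Coideal k) (hX : H.mem X) (hb : FinCond k b X) :
    ∃ Y, H.mem Y ∧ Y ∈ Basic k b X := by
  obtain ⟨N, -, hN⟩ := exists_rList_bound hb.2
  have hY := isBlockSeq_appendTail (H.blockseq X hX) hb.1 hN
  exact ⟨appendTail b X N, H.finiteChanges X _ hX hY (finite_symmDiff_range_appendTail X N),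
    hY, rList_appendTail X N, cond_appendTail hb.2 N⟩

theorem Semiselective.exists_forall_finCond {H : Coideal k} (hH : Semiselective k H)
    (hA : H.mem A) (P : List (ℕ → ℕ) → (ℕ → ℕ → ℕ) → Prop)
    (hP : ∀ a X Y, Basic k a X ⊆ Basic k a Y → P a Y → P a X)
    (hdense : ∀ a Y, H.mem Y → FinCond k a Y →
      ∃ X, H.mem X ∧ X ∈ Basic k (rList (depth k Y a) Y) Y ∧ P a X) :
    ∃ B, H.mem B ∧ Cond k B A ∧ ∀ a, FinCond k a B → P a B := by
  have hAb := H.blockseq A hA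
  set D : List (ℕ → ℕ) → Set (ℕ → ℕ → ℕ) := fun a =>
    {X | (H.mem X ∧ X ∈ Basic k (rList (depth k A a) A) A) ∧ P a X}
  have hD : ∀ a, FinCond k a A →
      DenseOpenIn k (D a) ({X | H.mem X} ∩ Basic k (rList (depth k A a) A) A) := by
    intro a ha
    refine ⟨fun X hX => hX.1, ?_, fun X Y hX hY hXY =>
      ⟨hX, hP a X Y (basic_mono hXY (H.blockseq X hX.1) (H.blockseq Y hY.1.1)) hY.2⟩⟩
    rintro Y ⟨hY, hYA⟩
    have hpre := rList_eq_of_mem_basic_rList hYA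
    obtain ⟨X, hX, hXY, hPX⟩ :=
      hdense a Y hY ⟨ha.1, forall_inSpan_of_rList_depth_eq ha.2 hpre⟩
    rw [depth_congr ha.2 hpre] at hXY
    refine ⟨X, ⟨⟨hX, hXY.1, ?_, hXY.2.2.trans hYA.2.2 (H.blockseq Y hY) hAb⟩, hPX⟩,
      hXY.2.2⟩
    rw [length_rList, rList_eq_of_mem_basic_rList hXY, hpre]
  obtain ⟨B, hB, hBA, As, hAsD, hBAs⟩ := hH A hA D hD A hA (cond_refl A)
  exact ⟨B, hB, hBA, fun a ha =>
    hP a B (As a) (hBAs a ha) (hAsD a (ha.mono hBA (H.blockseq B hB) hAb)).2⟩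

def Accepts (k : ℕ) (F : Set (List (ℕ → ℕ))) (a : List (ℕ → ℕ)) (Y : ℕ → ℕ → ℕ) :
    Prop :=
  ∀ C ∈ Basic k a Y, ∃ n, rList n C ∈ F

def Rejects (k : ℕ) (H : Coideal k) (F : Set (List (ℕ → ℕ))) (a : List (ℕ → ℕ))
    (Y : ℕ → ℕ → ℕ) : Prop :=
  ∀ Z, H.mem Z → Z ∈ Basic k a Y → ¬ Accepts k F a Z

section AcceptReject

variable {H : Coideal k} {F : Set (List (ℕ → ℕ))}

theorem Accepts.mono (h : Basic k a X ⊆ Basic k a Y) (hY : Accepts k F a Y) :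
    Accepts k F a X :=
  fun C hC => hY C (h hC)

theorem Rejects.mono (h : Basic k a X ⊆ Basic k a Y) (hY : Rejects k H F a Y) :
    Rejects k H F a X :=
  fun Z hZ hZX => hY Z hZ (h hZX)

theorem Coideal.exists_accepts_or_rejects (H : Coideal k) (F : Set (List (ℕ → ℕ)))
    (hY : H.mem Y) (ha : FinCond k a Y) :
    ∃ X, H.mem X ∧ X ∈ Basic k (rList (depth k Y a) Y) Y ∧
      (Accepts k F a X ∨ Rejects k H F a X) := by
  by_cases h : ∃ Z, H.mem Z ∧ Z ∈ Basic k a Y ∧ Accepts k F a Z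
  · obtain ⟨Z, hZ, hZY, hacc⟩ := h
    obtain ⟨X, hX, hXY, -, hXZ⟩ :=
      H.a3_2 Y hY a ha Z hZ hZY.2.2 ⟨Z, hZY.1, hZY.2.1, cond_refl Z⟩
    exact ⟨X, hX, hXY, Or.inl (hacc.mono hXZ)⟩
  · exact ⟨Y, hY, mem_basic_rList_self.mpr ⟨H.blockseq Y hY, cond_refl Y⟩,
      Or.inr fun Z hZ hZY hacc => h ⟨Z, hZ, hZY, hacc⟩⟩

theorem Rejects.not_mem (h : Rejects k H F b X) (hX : H.mem X) (hb : FinCond k b X) : b ∉ F := by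
  intro hbF
  obtain ⟨Y, hY, hYX⟩ := H.exists_mem_basic hX hb
  exact h Y hY hYX fun C hC => ⟨b.length, by rw [hC.2.1]; exact hbF⟩

def extensions (k : ℕ) (a : List (ℕ → ℕ)) (X : ℕ → ℕ → ℕ) :
    Set (List (ℕ → ℕ)) :=
  {b | ∃ C ∈ Basic k a X, b = rList (a.length + 1) C}

theorem extensions_mono (h : Basic k a X ⊆ Basic k a Y) : extensions k a X ⊆ extensions k a Y :=
  fun _ ⟨C, hC, hb⟩ => ⟨C, h hC, hb⟩

theorem rejects_of_forall_extensions {B' : ℕ → ℕ → ℕ} (hB : IsBlockSeq k B)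
    (hdec : ∀ a, FinCond k a B → Accepts k F a B ∨ Rejects k H F a B)
    (hnil : Rejects k H F [] B) (hB' : H.mem B') (hB'B : Cond k B' B)
    (hhom : ∀ a, FinCond k a B' →
      extensions k a B' ⊆ {b | Rejects k H F b B} ∨
        extensions k a B' ∩ {b | Rejects k H F b B} = ∅) :
    ∀ b, FinCond k b B' → Rejects k H F b B := by
  have hB'b := H.blockseq B' hB'
  intro b
  induction b using List.reverseRecOn with
  | nil => exact fun _ => hnil
  | append_singleton a p ih =>
    intro hap
    have ha := hap.of_append
    rcases hhom a ha with hsub | hdisj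
    · obtain ⟨C, -, hC⟩ := H.exists_mem_basic hB' hap
      refine hsub ⟨C, basic_append_subset hC, ?_⟩
      rw [← hC.2.1, List.length_append, List.length_singleton]
    · obtain ⟨Y, hY, hYB'⟩ := H.exists_mem_basic hB' ha
      refine (ih ha Y hY (basic_mono hB'B hB'b hB hYB') fun C hC => ?_).elim
      have hCB' := basic_mono hYB'.2.2 (H.blockseq Y hY) hB'b hC
      have hCB := hCB'.2.2.trans hB'B hB'b hB
      have hnrej : ¬ Rejects k H F (rList (a.length + 1) C) B := fun h =>
        Set.eq_empty_iff_forall_notMem.mp hdisj _ ⟨⟨C, hCB', rfl⟩, h⟩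
      exact (hdec _ (hC.1.finCond_rList hCB _)).resolve_right hnrej C
        (mem_basic_rList_self.mpr ⟨hC.1, hCB⟩)

end AcceptReject

/-- Semiselective Galvin lemma for `FIN_k^∞`. -/
theorem semiselective_galvin (k : ℕ) (H : Coideal k) (hH : Semiselective k H)
    (F : Set (List (ℕ → ℕ))) (A : ℕ → ℕ → ℕ) (hA : H.mem A) :
    ∃ B, H.mem B ∧ Cond k B A ∧
      ((∀ b, FinCond k b B → b ∉ F) ∨
       (∀ C, IsBlockSeq k C → Cond k C B → ∃ n, rList n C ∈ F)) := by
  obtain ⟨B, hB, hBA, hdec⟩ := hH.exists_forall_finCond hA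
    (fun a X => Accepts k F a X ∨ Rejects k H F a X)
    (fun _ _ _ h => Or.imp (Accepts.mono h) (Rejects.mono h))
    (fun _ _ hY ha => H.exists_accepts_or_rejects F hY ha)
  by_cases hacc : Accepts k F [] B
  · exact ⟨B, hB, hBA, Or.inr fun C hC hCB => hacc C ⟨hC, rfl, hCB⟩⟩
  set O := {b | Rejects k H F b B}
  obtain ⟨B', hB', hB'B, hhom⟩ := hH.exists_forall_finCond hB
    (fun a X => extensions k a X ⊆ O ∨ extensions k a X ∩ O = ∅)
    (fun _ _ _ h => Or.imp (extensions_mono h).trans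
      fun hO => Set.subset_eq_empty (Set.inter_subset_inter_left _ (extensions_mono h)) hO)
    (fun a Y hY ha => H.a4 Y hY a ha O)
  have hBb := H.blockseq B hB
  have hB'b := H.blockseq B' hB'
  refine ⟨B', hB', hB'B.trans hBA hBb (H.blockseq A hA), Or.inl fun b hb => ?_⟩
  have hrej := rejects_of_forall_extensions hBb hdec ((hdec [] finCond_nil).resolve_left hacc)
    hB' hB'B hhom b hb
  exact hrej.not_mem hB (hb.mono hB'B hB'b hBb)

end FINkSpace
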